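/- arXiv:2301.00791 — 3 statements merged into one kernel-verified Lean document; each statement's English description precedes it below -/
import Mathlib

section
/- Let q be a prime power and F a finite field with q elements, and let s₁, s₂ be integers with s₁ + s₂ ≥ 0. Then D_q(λ,φ,s₁,s₂) ≥ 0 for all λ, φ ∈ ℕ, and for all ρ, π ∈ ℕ the double series ∑_{λ=0}^{∞} ∑_{φ=0}^{∞} D_q(λ,φ,s₁,s₂) · |Sur_F(F^λ, F^ρ)| · |Sur_F(F^φ, F^π)| converges absolutely and its sum equals q^{ρπ − s₁ρ − s₂π}, where |Sur_F(F^a, F^b)| denotes the number of surjective F-linear maps F^a → F^b. In particular (taking ρ = π = 0), ∑_{λ,φ} D_q(λ,φ,s₁,s₂) = 1. -/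
open scoped BigOperators

/-- `η_q(k) = ∏_{i=1}^{k} (1 - q^{-i})`. -/
noncomputable def etaQ (q : ℝ) (k : ℕ) : ℝ :=
  ∏ i ∈ Finset.range k, (1 - q ^ (-(i : ℝ) - 1))

/-- `η_q` at an integer argument (only meaningful for nonnegative arguments). -/
noncomputable def etaZ (q : ℝ) (k : ℤ) : ℝ := etaQ q k.toNat

/-- `η_q(∞) = ∏_{i=1}^{∞} (1 - q^{-i})`. -/
noncomputable def etaInf (q : ℝ) : ℝ := ∏' i : ℕ, (1 - q ^ (-(i : ℝ) - 1))

/-- `D_q(λ,φ,s₁,s₂)`:  `q^{-λ²-φ²+λφ-s₁λ-s₂φ} η_q(∞) η_q(s₁+s₂) /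
(η_q(λ) η_q(φ) η_q(s₂-λ+φ) η_q(s₁+λ-φ))` when `-s₁ ≤ λ-φ ≤ s₂`, and `0` otherwise. -/
noncomputable def Dq (q : ℝ) (s₁ s₂ : ℤ) (l φ : ℕ) : ℝ :=
  if -s₁ ≤ (l : ℤ) - (φ : ℤ) ∧ (l : ℤ) - (φ : ℤ) ≤ s₂ then
    q ^ (-(l : ℝ) ^ 2 - (φ : ℝ) ^ 2 + (l : ℝ) * (φ : ℝ)
          - (s₁ : ℝ) * (l : ℝ) - (s₂ : ℝ) * (φ : ℝ)) *
      etaInf q * etaZ q (s₁ + s₂) /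
      (etaQ q l * etaQ q φ * etaZ q (s₂ - (l : ℤ) + (φ : ℤ)) * etaZ q (s₁ + (l : ℤ) - (φ : ℤ)))
  else 0

/-- The number of surjective `F`-linear maps `F^a → F^b`. -/
noncomputable def surCount (F : Type) [Field F] (a b : ℕ) : ℕ :=
  Nat.card {f : (Fin a → F) →ₗ[F] (Fin b → F) // Function.Surjective f}

/-!
Write `p = q⁻¹`. Shifting `(λ, φ)` by `(ρ, π)` and using
`|Sur(F^{a+ρ}, F^ρ)| = q^{(a+ρ)ρ} (p;p)_{a+ρ} / (p;p)_a` turns the `(ρ, π)` moment of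
`D_q(·,·,s₁,s₂)` into `q^{ρπ-s₁ρ-s₂π}` times the total mass of `D_q(·,·,s₁+ρ-π,s₂+π-ρ)`, so it
suffices that every `D_q` has total mass `1`. For fixed `φ` the sum over `λ` is a finite
`q`-Chu–Vandermonde sum, proved by induction on its length from the Pascal recursion of
`1/(p;p)_m`. What remains is the Durfee rectangle identity
`∑ₐ p^{a(a+r)} / ((p;p)_a (p;p)_{a+r}) = 1/(p;p)_∞`, the limit of the finite sums by Tannery's
theorem.
-/

open Filter Topology Finset

section QSeries

noncomputable def qPochhammer (p : ℝ) (k : ℕ) : ℝ := ∏ i ∈ range k, (1 - p ^ (i + 1))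

noncomputable def qPochhammerInf (p : ℝ) : ℝ := ∏' i : ℕ, (1 - p ^ (i + 1))

/-- `1 / (p; p)_m`, extended by zero to negative `m`: with this convention the recursion
`qPochhammerInv_sub_one` holds for every integer, and sums over `ℕ` need no range conditions. -/
noncomputable def qPochhammerInv (p : ℝ) (m : ℤ) : ℝ :=
  if 0 ≤ m then (qPochhammer p m.toNat)⁻¹ else 0

variable {p : ℝ}

lemma one_sub_pow_succ_pos (hp₀ : 0 ≤ p) (hp₁ : p < 1) (i : ℕ) : 0 < 1 - p ^ (i + 1) :=
  sub_pos.mpr (pow_lt_one₀ hp₀ hp₁ i.succ_ne_zero)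

lemma qPochhammer_succ (k : ℕ) : qPochhammer p (k + 1) = qPochhammer p k * (1 - p ^ (k + 1)) :=
  prod_range_succ _ k

lemma qPochhammer_pos (hp₀ : 0 ≤ p) (hp₁ : p < 1) (k : ℕ) : 0 < qPochhammer p k :=
  prod_pos fun i _ => one_sub_pow_succ_pos hp₀ hp₁ i

lemma qPochhammer_le_one (hp₀ : 0 ≤ p) (hp₁ : p < 1) (k : ℕ) : qPochhammer p k ≤ 1 :=
  prod_le_one (fun i _ => (one_sub_pow_succ_pos hp₀ hp₁ i).le)
    fun _ _ => sub_le_self _ (pow_nonneg hp₀ _)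

lemma qPochhammer_antitone (hp₀ : 0 ≤ p) (hp₁ : p < 1) : Antitone (qPochhammer p) :=
  antitone_nat_of_succ_le fun k => by
    rw [qPochhammer_succ]
    exact mul_le_of_le_one_right (qPochhammer_pos hp₀ hp₁ k).le
      (sub_le_self _ (pow_nonneg hp₀ _))

lemma summable_pow_succ (hp₀ : 0 ≤ p) (hp₁ : p < 1) : Summable fun i : ℕ => p ^ (i + 1) :=
  (summable_nat_add_iff 1).mpr (summable_geometric_of_lt_one hp₀ hp₁)

lemma summable_log_one_sub_pow_succ (hp₀ : 0 ≤ p) (hp₁ : p < 1) :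
    Summable fun i : ℕ => Real.log (1 - p ^ (i + 1)) := by
  simpa only [sub_eq_add_neg] using
    Real.summable_log_one_add_of_summable (summable_pow_succ hp₀ hp₁).neg

lemma hasProd_qPochhammerInf (hp₀ : 0 ≤ p) (hp₁ : p < 1) :
    HasProd (fun i : ℕ => 1 - p ^ (i + 1)) (qPochhammerInf p) :=
  (Real.multipliable_of_summable_log (one_sub_pow_succ_pos hp₀ hp₁)
    (summable_log_one_sub_pow_succ hp₀ hp₁)).hasProd

lemma qPochhammerInf_pos (hp₀ : 0 ≤ p) (hp₁ : p < 1) : 0 < qPochhammerInf p := by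
  rw [qPochhammerInf, ← Real.rexp_tsum_eq_tprod (one_sub_pow_succ_pos hp₀ hp₁)
    (summable_log_one_sub_pow_succ hp₀ hp₁)]
  exact Real.exp_pos _

lemma tendsto_qPochhammer (hp₀ : 0 ≤ p) (hp₁ : p < 1) :
    Tendsto (qPochhammer p) atTop (𝓝 (qPochhammerInf p)) :=
  (hasProd_qPochhammerInf hp₀ hp₁).tendsto_prod_nat

lemma qPochhammerInf_le_qPochhammer (hp₀ : 0 ≤ p) (hp₁ : p < 1) (k : ℕ) :
    qPochhammerInf p ≤ qPochhammer p k :=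
  (qPochhammer_antitone hp₀ hp₁).le_of_tendsto (tendsto_qPochhammer hp₀ hp₁) k

@[simp]
lemma qPochhammerInv_natCast (k : ℕ) : qPochhammerInv p k = (qPochhammer p k)⁻¹ := by
  simp [qPochhammerInv]

lemma qPochhammerInv_of_neg {m : ℤ} (hm : m < 0) : qPochhammerInv p m = 0 :=
  if_neg hm.not_ge

lemma qPochhammerInv_of_nonneg {m : ℤ} (hm : 0 ≤ m) :
    qPochhammerInv p m = (qPochhammer p m.toNat)⁻¹ :=
  if_pos hm

lemma qPochhammerInv_nonneg (hp₀ : 0 ≤ p) (hp₁ : p < 1) (m : ℤ) : 0 ≤ qPochhammerInv p m := by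
  unfold qPochhammerInv
  split_ifs
  exacts [(inv_pos.mpr (qPochhammer_pos hp₀ hp₁ _)).le, le_rfl]

lemma qPochhammerInv_le (hp₀ : 0 ≤ p) (hp₁ : p < 1) (m : ℤ) :
    qPochhammerInv p m ≤ (qPochhammerInf p)⁻¹ := by
  have hinf := qPochhammerInf_pos hp₀ hp₁
  unfold qPochhammerInv
  split_ifs
  exacts [inv_anti₀ hinf (qPochhammerInf_le_qPochhammer hp₀ hp₁ _), (inv_pos.mpr hinf).le]

lemma one_le_qPochhammerInv (hp₀ : 0 ≤ p) (hp₁ : p < 1) {m : ℤ} (hm : 0 ≤ m) :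
    1 ≤ qPochhammerInv p m := by
  rw [qPochhammerInv_of_nonneg hm]
  exact one_le_inv₀ (qPochhammer_pos hp₀ hp₁ _) |>.mpr (qPochhammer_le_one hp₀ hp₁ _)

lemma qPochhammerInv_mul_neg (m : ℤ) :
    qPochhammerInv p m * qPochhammerInv p (-m) = if m = 0 then 1 else 0 := by
  rcases lt_trichotomy m 0 with hm | rfl | hm
  · simp [qPochhammerInv_of_neg hm, hm.ne]
  · simp [qPochhammerInv, qPochhammer]
  · simp [qPochhammerInv_of_neg (neg_neg_of_pos hm), hm.ne']

lemma qPochhammerInv_sub_one (hp₀ : 0 ≤ p) (hp₁ : p < 1) (m : ℤ) :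
    qPochhammerInv p (m - 1) = (1 - p ^ m) * qPochhammerInv p m := by
  rcases lt_trichotomy m 0 with hm | rfl | hm
  · rw [qPochhammerInv_of_neg hm, qPochhammerInv_of_neg (by omega), mul_zero]
  · rw [qPochhammerInv_of_neg (by omega), zpow_zero, sub_self, zero_mul]
  · obtain ⟨k, rfl⟩ : ∃ k : ℕ, m = k + 1 := ⟨m.toNat - 1, by omega⟩
    have hk := (one_sub_pow_succ_pos hp₀ hp₁ k).ne'
    rw [add_sub_cancel_right, ← Nat.cast_succ, qPochhammerInv_natCast, qPochhammerInv_natCast,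
      zpow_natCast, qPochhammer_succ, mul_inv, Nat.succ_eq_add_one, mul_left_comm,
      mul_inv_cancel₀ hk, mul_one]

lemma qPochhammerInv_mul_pascal (hp₀ : 0 < p) (hp₁ : p < 1) (n : ℕ) (c : ℤ) :
    (1 - p ^ (n + 1)) * (qPochhammerInv p c * qPochhammerInv p (n + 1 - c)) =
      qPochhammerInv p c * qPochhammerInv p (n - c) +
        p ^ (n + 1 - c) * (qPochhammerInv p (c - 1) * qPochhammerInv p (n + 1 - c)) := by
  have hpow : p ^ (n + 1 - c) * p ^ c = p ^ (n + 1) := by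
    rw [← zpow_add₀ hp₀.ne', sub_add_cancel]
    exact_mod_cast zpow_natCast p (n + 1)
  rw [qPochhammerInv_sub_one hp₀.le hp₁ c,
    show (n : ℤ) - c = n + 1 - c - 1 by ring, qPochhammerInv_sub_one hp₀.le hp₁]
  linear_combination (qPochhammerInv p c * qPochhammerInv p (n + 1 - c)) * hpow

lemma tendsto_qPochhammerInv_natCast_sub (hp₀ : 0 ≤ p) (hp₁ : p < 1) (c : ℤ) :
    Tendsto (fun n : ℕ => qPochhammerInv p (n - c)) atTop (𝓝 (qPochhammerInf p)⁻¹) := by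
  have htoNat : Tendsto (fun n : ℕ => ((n : ℤ) - c).toNat) atTop atTop :=
    tendsto_atTop_atTop.mpr fun B => ⟨B + c.toNat, fun n hn => by omega⟩
  refine (((tendsto_qPochhammer hp₀ hp₁).comp htoNat).inv₀
    (qPochhammerInf_pos hp₀ hp₁).ne').congr' ?_
  filter_upwards [eventually_ge_atTop c.toNat] with n hn
  rw [Function.comp_apply, qPochhammerInv_of_nonneg (by omega)]

noncomputable def durfeeTerm (p : ℝ) (r : ℤ) (a : ℕ) : ℝ :=
  p ^ ((a : ℤ) * (a + r)) * (qPochhammer p a)⁻¹ * qPochhammerInv p (a + r)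

lemma durfeeTerm_nonneg (hp₀ : 0 ≤ p) (hp₁ : p < 1) (r : ℤ) (a : ℕ) : 0 ≤ durfeeTerm p r a := by
  have := qPochhammer_pos hp₀ hp₁ a
  have := qPochhammerInv_nonneg hp₀ hp₁ (a + r)
  unfold durfeeTerm
  positivity

lemma hasSum_durfeeTerm_mul_zero (r : ℤ) :
    HasSum (fun a : ℕ => durfeeTerm p r a * qPochhammerInv p (0 - (a + r)))
      (qPochhammerInv p (0 - r) * (qPochhammer p 0)⁻¹) := by
  have hterm (a : ℕ) : durfeeTerm p r a * qPochhammerInv p (0 - (a + r)) =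
      if (a : ℤ) = -r then qPochhammerInv p (-r) else 0 := by
    rw [durfeeTerm, zero_sub, mul_assoc, qPochhammerInv_mul_neg]
    split_ifs with h₁ h₂ h₂
    · rw [← h₂, qPochhammerInv_natCast, h₁, mul_zero, zpow_zero, one_mul, mul_one]
    all_goals first | omega | simp
  simp_rw [hterm]
  simp only [zero_sub, qPochhammer, range_zero, prod_empty, inv_one, mul_one]
  rcases le_or_gt r 0 with hr | hr
  · lift -r to ℕ using neg_nonneg.mpr hr with k
    simpa only [Nat.cast_inj] using hasSum_ite_eq k (qPochhammerInv p k)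
  · simp [qPochhammerInv_of_neg (neg_neg_of_pos hr)]

lemma durfeeTerm_mul_pascal (hp₀ : 0 < p) (hp₁ : p < 1) (n : ℕ) (r : ℤ) (a : ℕ) :
    (1 - p ^ (n + 1)) * (durfeeTerm p r a * qPochhammerInv p (n + 1 - (a + r))) =
      durfeeTerm p r a * qPochhammerInv p (n - (a + r)) +
        p ^ (n + 1 - r) * (durfeeTerm p (r - 1) a * qPochhammerInv p (n - (a + (r - 1)))) := by
  have hpow : p ^ (n + 1 - r) * p ^ ((a : ℤ) * (a + r - 1)) =
      p ^ ((a : ℤ) * (a + r)) * p ^ (n + 1 - (a + r)) := by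
    rw [← zpow_add₀ hp₀.ne', ← zpow_add₀ hp₀.ne']
    ring_nf
  have := qPochhammerInv_mul_pascal hp₀ hp₁ n (a + r)
  unfold durfeeTerm
  rw [show (a : ℤ) + (r - 1) = a + r - 1 by ring,
    show (n : ℤ) - (a + r - 1) = n + 1 - (a + r) by ring]
  linear_combination (p ^ ((a : ℤ) * (a + r)) * (qPochhammer p a)⁻¹) * this -
    ((qPochhammer p a)⁻¹ * qPochhammerInv p (a + r - 1) * qPochhammerInv p (n + 1 - (a + r))) * hpow

lemma hasSum_durfeeTerm_mul (hp₀ : 0 < p) (hp₁ : p < 1) (n : ℕ) (r : ℤ) :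
    HasSum (fun a : ℕ => durfeeTerm p r a * qPochhammerInv p (n - (a + r)))
      (qPochhammerInv p (n - r) * (qPochhammer p n)⁻¹) := by
  induction n generalizing r with
  | zero => exact_mod_cast hasSum_durfeeTerm_mul_zero r
  | succ n ih =>
    have hn := (one_sub_pow_succ_pos hp₀.le hp₁ n).ne'
    have hsum := (((ih r).add ((ih (r - 1)).mul_left (p ^ (n + 1 - r)))).mul_left
      (1 - p ^ (n + 1))⁻¹)
    have hrec := qPochhammerInv_sub_one hp₀.le hp₁ (n + 1 - r)
    rw [show (n : ℤ) + 1 - r - 1 = n - r by ring] at hrec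
    have hval : qPochhammerInv p (n + 1 - r) * (qPochhammer p (n + 1))⁻¹ =
        (1 - p ^ (n + 1))⁻¹ * (qPochhammerInv p (n - r) * (qPochhammer p n)⁻¹ +
          p ^ (n + 1 - r) * (qPochhammerInv p (n - (r - 1)) * (qPochhammer p n)⁻¹)) := by
      rw [show (n : ℤ) - (r - 1) = n + 1 - r by ring, hrec, qPochhammer_succ, mul_inv]
      ring
    push_cast
    rw [hval]
    refine hsum.congr_fun fun a => ?_
    rw [eq_inv_mul_iff_mul_eq₀ hn, durfeeTerm_mul_pascal hp₀ hp₁]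

lemma summable_durfeeTerm (hp₀ : 0 < p) (hp₁ : p < 1) (r : ℤ) : Summable (durfeeTerm p r) := by
  refine summable_of_sum_range_le (c := (qPochhammerInf p)⁻¹ * (qPochhammerInf p)⁻¹)
    (durfeeTerm_nonneg hp₀.le hp₁ r) fun N => ?_
  -- for `a < N` the extra factor `1 / (p;p)_{n-a-r}` is at least `1`
  set n := N + r.toNat
  calc ∑ a ∈ range N, durfeeTerm p r a
      ≤ ∑ a ∈ range N, durfeeTerm p r a * qPochhammerInv p (n - (a + r)) := by
        refine sum_le_sum fun a ha => le_mul_of_one_le_right (durfeeTerm_nonneg hp₀.le hp₁ r a)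
          (one_le_qPochhammerInv hp₀.le hp₁ ?_)
        have := mem_range.mp ha
        omega
    _ ≤ qPochhammerInv p (n - r) * (qPochhammer p n)⁻¹ :=
        sum_le_hasSum _ (fun a _ => mul_nonneg (durfeeTerm_nonneg hp₀.le hp₁ r a)
          (qPochhammerInv_nonneg hp₀.le hp₁ _)) (hasSum_durfeeTerm_mul hp₀ hp₁ n r)
    _ ≤ (qPochhammerInf p)⁻¹ * (qPochhammerInf p)⁻¹ :=
        mul_le_mul (qPochhammerInv_le hp₀.le hp₁ _)
          (inv_anti₀ (qPochhammerInf_pos hp₀.le hp₁) (qPochhammerInf_le_qPochhammer hp₀.le hp₁ n))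
          (inv_pos.mpr (qPochhammer_pos hp₀.le hp₁ n)).le
          (inv_pos.mpr (qPochhammerInf_pos hp₀.le hp₁)).le

lemma hasSum_durfeeTerm (hp₀ : 0 < p) (hp₁ : p < 1) (r : ℤ) :
    HasSum (durfeeTerm p r) (qPochhammerInf p)⁻¹ := by
  have hinf := (qPochhammerInf_pos hp₀.le hp₁).ne'
  have hsumm := summable_durfeeTerm hp₀ hp₁ r
  have hlim₁ := tendsto_tsum_of_dominated_convergence (𝓕 := atTop)
    (f := fun (n : ℕ) a => durfeeTerm p r a * qPochhammerInv p (n - (a + r)))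
    (hsumm.mul_right (qPochhammerInf p)⁻¹)
    (fun a => (tendsto_qPochhammerInv_natCast_sub hp₀.le hp₁ _).const_mul _)
    (Eventually.of_forall fun n a => by
      rw [Real.norm_of_nonneg (mul_nonneg (durfeeTerm_nonneg hp₀.le hp₁ r a)
        (qPochhammerInv_nonneg hp₀.le hp₁ _))]
      exact mul_le_mul_of_nonneg_left (qPochhammerInv_le hp₀.le hp₁ _)
        (durfeeTerm_nonneg hp₀.le hp₁ r a))
  have hlim₂ : Tendsto (fun n : ℕ => qPochhammerInv p (n - r) * (qPochhammer p n)⁻¹) atTop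
      (𝓝 ((qPochhammerInf p)⁻¹ * (qPochhammerInf p)⁻¹)) :=
    (tendsto_qPochhammerInv_natCast_sub hp₀.le hp₁ r).mul
      ((tendsto_qPochhammer hp₀.le hp₁).inv₀ hinf)
  simp only [fun n : ℕ => (hasSum_durfeeTerm_mul hp₀ hp₁ n r).tsum_eq, tsum_mul_right] at hlim₁
  have := tendsto_nhds_unique hlim₁ hlim₂
  rw [mul_left_inj' (inv_ne_zero hinf)] at this
  exact this ▸ hsumm.hasSum

noncomputable def weight (p : ℝ) (s₁ s₂ : ℤ) (a b : ℕ) : ℝ :=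
  p ^ ((a : ℤ) ^ 2 + (b : ℤ) ^ 2 - a * b + s₁ * a + s₂ * b) * (qPochhammer p a)⁻¹ *
    (qPochhammer p b)⁻¹ * qPochhammerInv p (s₂ - a + b) * qPochhammerInv p (s₁ + a - b)

lemma weight_nonneg (hp₀ : 0 ≤ p) (hp₁ : p < 1) (s₁ s₂ : ℤ) (a b : ℕ) : 0 ≤ weight p s₁ s₂ a b := by
  have := qPochhammer_pos hp₀ hp₁ a
  have := qPochhammer_pos hp₀ hp₁ b
  have := qPochhammerInv_nonneg hp₀ hp₁ (s₂ - a + b)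
  have := qPochhammerInv_nonneg hp₀ hp₁ (s₁ + a - b)
  unfold weight
  positivity

lemma hasSum_weight_fiber (hp₀ : 0 < p) (hp₁ : p < 1) {s₁ s₂ : ℤ} (hs : 0 ≤ s₁ + s₂) (b : ℕ) :
    HasSum (fun a => weight p s₁ s₂ a b)
      ((qPochhammer p (s₁ + s₂).toNat)⁻¹ * durfeeTerm p s₂ b) := by
  obtain ⟨n, hn⟩ := Int.eq_ofNat_of_zero_le hs
  have hsum := (hasSum_durfeeTerm_mul hp₀ hp₁ n (s₁ - b)).mul_left
    (p ^ ((b : ℤ) * (b + s₂)) * (qPochhammer p b)⁻¹)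
  rw [← hn, show s₁ + s₂ - (s₁ - b) = b + s₂ by ring] at hsum
  rw [hn, Int.toNat_natCast]
  rw [durfeeTerm, mul_comm, mul_assoc]
  refine hsum.congr_fun fun a => ?_
  rw [show s₁ + s₂ - (a + (s₁ - b)) = s₂ - a + b by ring, weight, durfeeTerm,
    show (a : ℤ) + (s₁ - b) = s₁ + a - b by ring]
  have hpow : p ^ ((a : ℤ) ^ 2 + (b : ℤ) ^ 2 - a * b + s₁ * a + s₂ * b) =
      p ^ ((b : ℤ) * (b + s₂)) * p ^ ((a : ℤ) * (s₁ + a - b)) := by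
    rw [← zpow_add₀ hp₀.ne']
    ring_nf
  rw [hpow]
  ring

lemma hasSum_weight (hp₀ : 0 < p) (hp₁ : p < 1) {s₁ s₂ : ℤ} (hs : 0 ≤ s₁ + s₂) :
    HasSum (fun x : ℕ × ℕ => weight p s₁ s₂ x.1 x.2)
      ((qPochhammer p (s₁ + s₂).toNat)⁻¹ * (qPochhammerInf p)⁻¹) := by
  have hfiber := hasSum_weight_fiber hp₀ hp₁ hs
  have htotal := (hasSum_durfeeTerm hp₀ hp₁ s₂).mul_left (qPochhammer p (s₁ + s₂).toNat)⁻¹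
  have hsumm : Summable fun x : ℕ × ℕ => weight p s₁ s₂ x.2 x.1 := by
    refine (summable_prod_of_nonneg fun x => weight_nonneg hp₀.le hp₁ s₁ s₂ _ _).mpr
      ⟨fun b => (hfiber b).summable, ?_⟩
    simp_rw [(hfiber _).tsum_eq]
    exact htotal.summable
  rw [← (hsumm.hasSum.prod_fiberwise hfiber).unique htotal]
  exact (Equiv.prodComm ℕ ℕ).hasSum_iff.mp hsumm.hasSum

end QSeries

section Dq

variable {q : ℝ}

lemma one_sub_rpow_neg_sub_one (hq : 0 ≤ q) (i : ℕ) :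
    1 - q ^ (-(i : ℝ) - 1) = 1 - q⁻¹ ^ (i + 1) := by
  rw [show -(i : ℝ) - 1 = -((i + 1 : ℕ) : ℝ) by push_cast; ring, Real.rpow_neg hq,
    Real.rpow_natCast, inv_pow]

lemma etaQ_eq_qPochhammer (hq : 0 ≤ q) (k : ℕ) : etaQ q k = qPochhammer q⁻¹ k :=
  prod_congr rfl fun i _ => one_sub_rpow_neg_sub_one hq i

lemma etaInf_eq_qPochhammerInf (hq : 0 ≤ q) : etaInf q = qPochhammerInf q⁻¹ :=
  tprod_congr fun i => one_sub_rpow_neg_sub_one hq i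

lemma Dq_eq_mul_weight (hq : 0 ≤ q) (s₁ s₂ : ℤ) (l φ : ℕ) :
    Dq q s₁ s₂ l φ =
      qPochhammerInf q⁻¹ * qPochhammer q⁻¹ (s₁ + s₂).toNat * weight q⁻¹ s₁ s₂ l φ := by
  unfold Dq
  split_ifs with h
  · have hpow : q ^ (-(l : ℝ) ^ 2 - (φ : ℝ) ^ 2 + l * φ - s₁ * l - s₂ * φ) =
        q⁻¹ ^ ((l : ℤ) ^ 2 + (φ : ℤ) ^ 2 - l * φ + s₁ * l + s₂ * φ) := by
      rw [inv_zpow', ← Real.rpow_intCast]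
      push_cast
      ring_nf
    simp only [weight, etaZ, etaInf_eq_qPochhammerInf hq, etaQ_eq_qPochhammer hq]
    rw [qPochhammerInv_of_nonneg (by omega), qPochhammerInv_of_nonneg (by omega), hpow]
    ring
  · have : s₂ - l + φ < 0 ∨ s₁ + l - φ < 0 := by omega
    rcases this with h' | h' <;> simp [weight, qPochhammerInv_of_neg h']

lemma Dq_nonneg (hq : 1 < q) (s₁ s₂ : ℤ) (l φ : ℕ) : 0 ≤ Dq q s₁ s₂ l φ := by
  have hp₀ : 0 ≤ q⁻¹ := inv_nonneg.mpr (zero_le_one.trans hq.le)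
  have hp₁ : q⁻¹ < 1 := inv_lt_one_of_one_lt₀ hq
  rw [Dq_eq_mul_weight (zero_le_one.trans hq.le)]
  exact mul_nonneg (mul_nonneg (qPochhammerInf_pos hp₀ hp₁).le (qPochhammer_pos hp₀ hp₁ _).le)
    (weight_nonneg hp₀ hp₁ s₁ s₂ l φ)

lemma hasSum_Dq (hq : 1 < q) {s₁ s₂ : ℤ} (hs : 0 ≤ s₁ + s₂) :
    HasSum (fun x : ℕ × ℕ => Dq q s₁ s₂ x.1 x.2) 1 := by
  have hp₀ : 0 < q⁻¹ := inv_pos.mpr (zero_lt_one.trans hq)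
  have hp₁ : q⁻¹ < 1 := inv_lt_one_of_one_lt₀ hq
  have hinf := (qPochhammerInf_pos hp₀.le hp₁).ne'
  have hpoch := (qPochhammer_pos hp₀.le hp₁ (s₁ + s₂).toNat).ne'
  simp only [Dq_eq_mul_weight (zero_le_one.trans hq.le)]
  have hone : (1 : ℝ) = qPochhammerInf q⁻¹ * qPochhammer q⁻¹ (s₁ + s₂).toNat *
      ((qPochhammer q⁻¹ (s₁ + s₂).toNat)⁻¹ * (qPochhammerInf q⁻¹)⁻¹) := by
    rw [← mul_inv_rev, mul_inv_cancel₀ (mul_ne_zero hinf hpoch)]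
  rw [hone]
  exact (hasSum_weight hp₀ hp₁ hs).mul_left _

lemma Dq_add_mul (hq : 1 < q) (s₁ s₂ : ℤ) (a b ρ π : ℕ) :
    Dq q s₁ s₂ (a + ρ) (b + π) *
        (q ^ ((a + ρ) * ρ) * qPochhammer q⁻¹ (a + ρ) / qPochhammer q⁻¹ a) *
        (q ^ ((b + π) * π) * qPochhammer q⁻¹ (b + π) / qPochhammer q⁻¹ b) =
      q ^ ((ρ : ℤ) * π - s₁ * ρ - s₂ * π) * Dq q (s₁ + ρ - π) (s₂ + π - ρ) a b := by
  have hq₀ : q ≠ 0 := (zero_lt_one.trans hq).ne'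
  have hp₀ : 0 ≤ q⁻¹ := inv_nonneg.mpr (zero_le_one.trans hq.le)
  have hp₁ : q⁻¹ < 1 := inv_lt_one_of_one_lt₀ hq
  have hpoch (k : ℕ) := (qPochhammer_pos hp₀ hp₁ k).ne'
  have hpow : q⁻¹ ^ (((a + ρ : ℕ) : ℤ) ^ 2 + ((b + π : ℕ) : ℤ) ^ 2 - (a + ρ : ℕ) * (b + π : ℕ) +
        s₁ * (a + ρ : ℕ) + s₂ * (b + π : ℕ)) * q ^ ((a + ρ) * ρ) * q ^ ((b + π) * π) =
      q ^ ((ρ : ℤ) * π - s₁ * ρ - s₂ * π) *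
        q⁻¹ ^ ((a : ℤ) ^ 2 + (b : ℤ) ^ 2 - a * b + (s₁ + ρ - π) * a + (s₂ + π - ρ) * b) := by
    simp only [inv_zpow', ← zpow_natCast, ← zpow_add₀ hq₀]
    congr 1
    push_cast
    ring
  rw [Dq_eq_mul_weight (zero_le_one.trans hq.le), Dq_eq_mul_weight (zero_le_one.trans hq.le),
    show s₁ + ρ - π + (s₂ + π - ρ) = s₁ + s₂ by ring, weight, weight,
    show s₂ - ((a + ρ : ℕ) : ℤ) + (b + π : ℕ) = s₂ + π - ρ - a + b by push_cast; ring,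
    show s₁ + ((a + ρ : ℕ) : ℤ) - (b + π : ℕ) = s₁ + ρ - π + a - b by push_cast; ring]
  -- cancel `(p;p)_{a+ρ}` and `(p;p)_{b+π}` (with `p = q⁻¹`), then compare powers by `hpow`
  have hl := inv_mul_cancel₀ (hpoch (a + ρ))
  have hr := inv_mul_cancel₀ (hpoch (b + π))
  set K := qPochhammerInf q⁻¹ * qPochhammer q⁻¹ (s₁ + s₂).toNat *
    qPochhammerInv q⁻¹ (s₂ + π - ρ - a + b) * qPochhammerInv q⁻¹ (s₁ + ρ - π + a - b) *
    (qPochhammer q⁻¹ a)⁻¹ * (qPochhammer q⁻¹ b)⁻¹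
  set P := q⁻¹ ^ (((a + ρ : ℕ) : ℤ) ^ 2 + ((b + π : ℕ) : ℤ) ^ 2 - (a + ρ : ℕ) * (b + π : ℕ) +
        s₁ * (a + ρ : ℕ) + s₂ * (b + π : ℕ)) * q ^ ((a + ρ) * ρ) * q ^ ((b + π) * π)
  linear_combination K * hpow +
    K * P * ((qPochhammer q⁻¹ (b + π))⁻¹ * qPochhammer q⁻¹ (b + π)) * hl + K * P * hr

end Dq

lemma Matrix.surjective_mulVecLin_iff_linearIndependent_row {K m n : Type*} [Field K] [Fintype m]
    [Fintype n] (M : Matrix m n K) :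
    Function.Surjective M.mulVecLin ↔ LinearIndependent K M.row := by
  rw [linearIndependent_iff_card_eq_finrank_span, Set.finrank, ← Matrix.rank_eq_finrank_span_row,
    Matrix.rank, ← LinearMap.range_eq_top]
  constructor
  · intro h
    rw [h, finrank_top, Module.finrank_fintype_fun_eq_card]
  · intro h
    exact Submodule.eq_top_of_finrank_eq (h.symm ▸ (Module.finrank_fintype_fun_eq_card K).symm)

lemma surCount_eq_zero_of_lt (F : Type) [Field F] {a b : ℕ} (h : a < b) : surCount F a b = 0 := by
  rw [surCount, Nat.card_eq_zero]
  left
  refine ⟨fun ⟨f, hf⟩ => ?_⟩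
  have := LinearMap.finrank_le_finrank_of_surjective hf
  simp only [Module.finrank_fin_fun] at this
  omega

lemma surCount_eq_prod (F : Type) [Field F] [Fintype F] {a b : ℕ} (h : b ≤ a) :
    surCount F a b = ∏ i ∈ range b, (Fintype.card F ^ a - Fintype.card F ^ i) := by
  have e : {f : (Fin a → F) →ₗ[F] (Fin b → F) // Function.Surjective f} ≃
      {s : Fin b → (Fin a → F) // LinearIndependent F s} :=
    LinearMap.toMatrix'.toEquiv.subtypeEquiv fun f => by
      change _ ↔ LinearIndependent F (LinearMap.toMatrix' f).row
      rw [← Matrix.surjective_mulVecLin_iff_linearIndependent_row, ← Matrix.toLin'_apply',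
        Matrix.toLin'_toMatrix']
  rw [surCount, Nat.card_congr e, card_linearIndependent (by simpa using h),
    Module.finrank_fin_fun,
    Fin.prod_univ_eq_prod_range (fun i => Fintype.card F ^ a - Fintype.card F ^ i)]

lemma prod_range_pow_sub_pow_mul_qPochhammer {Q : ℝ} (hQ : Q ≠ 0) (a ρ : ℕ) :
    (∏ i ∈ range ρ, (Q ^ (a + ρ) - Q ^ i)) * qPochhammer Q⁻¹ a =
      Q ^ ((a + ρ) * ρ) * qPochhammer Q⁻¹ (a + ρ) := by
  have hfactor : ∀ j ∈ range ρ,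
      Q ^ (a + ρ) - Q ^ (ρ - 1 - j) = Q ^ (a + ρ) * (1 - Q⁻¹ ^ (a + j + 1)) := by
    intro j hj
    have hsplit : ρ - 1 - j + (a + j + 1) = a + ρ := by
      have := mem_range.mp hj
      omega
    rw [← hsplit, pow_add, mul_sub, mul_one, mul_assoc, ← mul_pow, mul_inv_cancel₀ hQ, one_pow,
      mul_one]
  rw [← prod_range_reflect, prod_congr rfl hfactor, prod_mul_distrib, prod_const, card_range,
    ← pow_mul, qPochhammer, qPochhammer, prod_range_add]
  ring

lemma surCount_add_eq (F : Type) [Field F] [Fintype F] (a ρ : ℕ) :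
    (surCount F (a + ρ) ρ : ℝ) = (Fintype.card F : ℝ) ^ ((a + ρ) * ρ) *
      qPochhammer (Fintype.card F : ℝ)⁻¹ (a + ρ) / qPochhammer (Fintype.card F : ℝ)⁻¹ a := by
  have hq : (1 : ℝ) < Fintype.card F := by exact_mod_cast Fintype.one_lt_card
  rw [eq_div_iff (qPochhammer_pos (inv_nonneg.mpr (zero_le_one.trans hq.le))
      (inv_lt_one_of_one_lt₀ hq) a).ne',
    ← prod_range_pow_sub_pow_mul_qPochhammer (zero_lt_one.trans hq).ne',
    surCount_eq_prod F (Nat.le_add_left ρ a), Nat.cast_prod]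
  congr 1
  refine prod_congr rfl fun i hi => ?_
  rw [Nat.cast_sub (Nat.pow_le_pow_right Fintype.card_pos (by have := mem_range.mp hi; omega))]
  push_cast
  rfl

lemma hasSum_Dq_mul_surCount (F : Type) [Field F] [Fintype F] {s₁ s₂ : ℤ} (hs : 0 ≤ s₁ + s₂)
    (ρ π : ℕ) :
    HasSum (fun x : ℕ × ℕ => Dq (Fintype.card F) s₁ s₂ x.1 x.2 * (surCount F x.1 ρ : ℝ) *
        (surCount F x.2 π : ℝ))
      ((Fintype.card F : ℝ) ^ ((ρ : ℤ) * π - s₁ * ρ - s₂ * π)) := by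
  have hq : (1 : ℝ) < Fintype.card F := by exact_mod_cast Fintype.one_lt_card
  have hshift : Function.Injective fun x : ℕ × ℕ => (x.1 + ρ, x.2 + π) := by
    rintro ⟨a, b⟩ ⟨a', b'⟩ h
    simpa using h
  refine (hshift.hasSum_iff fun ⟨l, φ⟩ hx => ?_).mp ?_
  · have : l < ρ ∨ φ < π := by
      by_contra! h
      exact hx ⟨(l - ρ, φ - π), by simp [Nat.sub_add_cancel h.1, Nat.sub_add_cancel h.2]⟩
    rcases this with h | h <;> simp [surCount_eq_zero_of_lt F h]
  · rw [← mul_one ((Fintype.card F : ℝ) ^ _)]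
    refine ((hasSum_Dq hq (s₁ := s₁ + ρ - π) (s₂ := s₂ + π - ρ) (by omega)).mul_left _).congr_fun
      fun x => ?_
    simp only [Function.comp_apply, surCount_add_eq]
    exact Dq_add_mul hq s₁ s₂ x.1 x.2 ρ π

theorem stmt_1_general (q : ℕ) (F : Type) [Field F] [Fintype F]
    (hF : Fintype.card F = q) (s₁ s₂ : ℤ) (hs : 0 ≤ s₁ + s₂) :
    (∀ l φ : ℕ, 0 ≤ Dq (q : ℝ) s₁ s₂ l φ) ∧
    (∀ ρ π : ℕ,
      HasSum (fun x : ℕ × ℕ =>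
          Dq (q : ℝ) s₁ s₂ x.1 x.2 * (surCount F x.1 ρ : ℝ) * (surCount F x.2 π : ℝ))
        ((q : ℝ) ^ ((ρ : ℝ) * (π : ℝ) - (s₁ : ℝ) * (ρ : ℝ) - (s₂ : ℝ) * (π : ℝ)))) ∧
    HasSum (fun x : ℕ × ℕ => Dq (q : ℝ) s₁ s₂ x.1 x.2) 1 := by
  subst hF
  have hq : (1 : ℝ) < Fintype.card F := by exact_mod_cast Fintype.one_lt_card
  refine ⟨Dq_nonneg hq s₁ s₂, fun ρ π => ?_, hasSum_Dq hq hs⟩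
  rw [show (ρ : ℝ) * π - s₁ * ρ - s₂ * π = ((ρ * π - s₁ * ρ - s₂ * π : ℤ) : ℝ) by push_cast; ring,
    Real.rpow_intCast]
  exact hasSum_Dq_mul_surCount F hs ρ π

/-- Let `q` be a prime power, `F` a finite field with `q` elements, and `s₁,s₂`
integers with `s₁+s₂ ≥ 0`.  Then `D_q(λ,φ,s₁,s₂) ≥ 0` for all `λ,φ`, and for all `ρ,π` the
double series `∑_{λ,φ} D_q(λ,φ,s₁,s₂) |Sur(F^λ,F^ρ)| |Sur(F^φ,F^π)|` converges (absolutely,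
i.e. unconditionally in `ℝ`) with sum `q^{ρπ - s₁ρ - s₂π}`; in particular (`ρ = π = 0`)
`∑_{λ,φ} D_q(λ,φ,s₁,s₂) = 1`. -/
theorem stmt_1 (q : ℕ) (hq : IsPrimePow q) (F : Type) [Field F] [Fintype F]
    (hF : Fintype.card F = q) (s₁ s₂ : ℤ) (hs : 0 ≤ s₁ + s₂) :
    (∀ l φ : ℕ, 0 ≤ Dq (q : ℝ) s₁ s₂ l φ) ∧
    (∀ ρ π : ℕ,
      HasSum (fun x : ℕ × ℕ =>
          Dq (q : ℝ) s₁ s₂ x.1 x.2 * (surCount F x.1 ρ : ℝ) * (surCount F x.2 π : ℝ))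
        ((q : ℝ) ^ ((ρ : ℝ) * (π : ℝ) - (s₁ : ℝ) * (ρ : ℝ) - (s₂ : ℝ) * (π : ℝ)))) ∧
    HasSum (fun x : ℕ × ℕ => Dq (q : ℝ) s₁ s₂ x.1 x.2) 1 :=
  stmt_1_general q F hF s₁ s₂ hs
end

section
/- Let q be a prime power and m ∈ ℕ. Then Pf_q(0,m) = ∏_{j=1}^{⌈m/2⌉} (1 − q^{−(2j−1)}). -/
open scoped BigOperators

/-- `Pf_q(t,m) = ∑_{e=0}^{m} (-1)^e q^{-(t+1)e} η_q(m) / (η_q(e) η_q(m-e))`. -/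
noncomputable def Pf (q t : ℝ) (m : ℕ) : ℝ :=
  ∑ e ∈ Finset.range (m + 1),
    (-1 : ℝ) ^ e * q ^ (-(t + 1) * (e : ℝ)) * etaQ q m / (etaQ q e * etaQ q (m - e))

/-!
Put `x = q⁻¹` and `F_m(z) = ∑_e (-1)^e [m, e]_x z^e`, so that `Pf_q(0, m) = F_m(x)`. The two
q-Pascal rules give `F_{m+1}(z) = F_m(xz) - z F_m(z)` and `F_{m+1}(xz) = F_m(xz) - x^{m+1} z F_m(z)`,
so the pair `(F_m(x), F_m(1))` satisfies a linear recursion. By induction, `F_m(x)` is the product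
of the `1 - x^{2j+1}` with `2j + 1 ≤ m`, while Gauss's alternating sum `F_m(1)` equals the same
product for even `m` and vanishes for odd `m`.
-/

open Finset

namespace QBinom

variable {K : Type*} [Field K] (x : K)

def qPoch (k : ℕ) : K :=
  ∏ i ∈ range k, (1 - x ^ (i + 1))

-- The Gaussian binomial coefficient `[m, e]_x`; the value `0` at `e = m + 1` is what makes the
-- q-Pascal rules hold up to `e = m`.
def qBinom (m e : ℕ) : K :=
  if e ≤ m then qPoch x m / (qPoch x e * qPoch x (m - e)) else 0

def altSum (m : ℕ) (z : K) : K :=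
  ∑ e ∈ range (m + 1), (-1) ^ e * qBinom x m e * z ^ e

def oddProd (m : ℕ) : K :=
  ∏ j ∈ range ((m + 1) / 2), (1 - x ^ (2 * j + 1))

variable {x}

@[simp]
lemma qPoch_zero : qPoch x 0 = 1 := prod_range_zero _

lemma qPoch_succ (k : ℕ) : qPoch x (k + 1) = qPoch x k * (1 - x ^ (k + 1)) :=
  prod_range_succ _ _

lemma qBinom_of_lt {m e : ℕ} (h : m < e) : qBinom x m e = 0 := if_neg (by omega)

lemma oddProd_succ_of_even {m : ℕ} (hm : Even m) :
    oddProd x (m + 1) = oddProd x m * (1 - x ^ (m + 1)) := by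
  obtain ⟨k, rfl⟩ := hm
  rw [oddProd, oddProd, show (k + k + 1 + 1) / 2 = (k + k + 1) / 2 + 1 by omega, prod_range_succ,
    show 2 * ((k + k + 1) / 2) + 1 = k + k + 1 by omega]

lemma oddProd_succ_of_odd {m : ℕ} (hm : Odd m) : oddProd x (m + 1) = oddProd x m := by
  obtain ⟨k, rfl⟩ := hm
  rw [oddProd, oddProd, show (2 * k + 1 + 1 + 1) / 2 = (2 * k + 1 + 1) / 2 by omega]

variable (hx : ∀ n ≠ 0, x ^ n ≠ 1)
include hx

lemma one_sub_pow_ne_zero {n : ℕ} (hn : n ≠ 0) : 1 - x ^ n ≠ 0 :=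
  sub_ne_zero.mpr (hx n hn).symm

lemma qPoch_ne_zero (k : ℕ) : qPoch x k ≠ 0 :=
  prod_ne_zero_iff.mpr fun i _ => one_sub_pow_ne_zero hx (Nat.add_one_ne_zero i)

lemma qBinom_zero_right (m : ℕ) : qBinom x m 0 = 1 := by
  simp [qBinom, div_self (qPoch_ne_zero hx m)]

lemma qBinom_succ_succ_mul (m e : ℕ) :
    qBinom x (m + 1) (e + 1) * (1 - x ^ (e + 1)) = qBinom x m e * (1 - x ^ (m + 1)) := by
  by_cases he : e ≤ m
  · have := qPoch_ne_zero hx e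
    have := qPoch_ne_zero hx (m - e)
    have := one_sub_pow_ne_zero hx (Nat.add_one_ne_zero e)
    rw [qBinom, qBinom, if_pos (by omega), if_pos he, Nat.add_sub_add_right, qPoch_succ,
      qPoch_succ]
    field_simp
  · rw [qBinom_of_lt (by omega), qBinom_of_lt (by omega), zero_mul, zero_mul]

lemma qBinom_succ_right_mul (m e : ℕ) :
    qBinom x m (e + 1) * (1 - x ^ (e + 1)) = qBinom x m e * (1 - x ^ (m - e)) := by
  rcases lt_trichotomy e m with he | rfl | he
  · have := qPoch_ne_zero hx e
    have := qPoch_ne_zero hx (m - (e + 1))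
    have := one_sub_pow_ne_zero hx (Nat.add_one_ne_zero e)
    have := one_sub_pow_ne_zero hx (Nat.add_one_ne_zero (m - (e + 1)))
    have hd : m - e = m - (e + 1) + 1 := by omega
    rw [qBinom, qBinom, if_pos (Nat.succ_le_of_lt he), if_pos he.le, qPoch_succ, hd, qPoch_succ]
    field_simp
  · rw [qBinom_of_lt (by omega), Nat.sub_self, pow_zero, sub_self, zero_mul, mul_zero]
  · rw [qBinom_of_lt he, qBinom_of_lt (by omega), zero_mul, zero_mul]

lemma qBinom_succ_succ {m e : ℕ} (he : e ≤ m) :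
    qBinom x (m + 1) (e + 1) = qBinom x m (e + 1) + x ^ (m - e) * qBinom x m e := by
  have hpow : x ^ (m + 1) = x ^ (m - e) * x ^ (e + 1) := by rw [← pow_add]; congr 1; omega
  apply mul_right_cancel₀ (one_sub_pow_ne_zero hx e.add_one_ne_zero)
  linear_combination qBinom_succ_succ_mul hx m e - qBinom_succ_right_mul hx m e
    - qBinom x m e * hpow

lemma qBinom_succ_succ' {m e : ℕ} (he : e ≤ m) :
    qBinom x (m + 1) (e + 1) = x ^ (e + 1) * qBinom x m (e + 1) + qBinom x m e := by
  have hpow : x ^ (m + 1) = x ^ (e + 1) * x ^ (m - e) := by rw [← pow_add]; congr 1; omega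
  apply mul_right_cancel₀ (one_sub_pow_ne_zero hx e.add_one_ne_zero)
  linear_combination qBinom_succ_succ_mul hx m e - x ^ (e + 1) * qBinom_succ_right_mul hx m e
    - qBinom x m e * hpow

lemma altSum_eq_one_add (m : ℕ) (z : K) :
    altSum x m z = 1 + ∑ e ∈ range (m + 1), (-1) ^ (e + 1) * qBinom x m (e + 1) * z ^ (e + 1) := by
  have hext : ∑ e ∈ range (m + 2), (-1) ^ e * qBinom x m e * z ^ e = altSum x m z := by
    rw [sum_range_succ, qBinom_of_lt (lt_add_one m), mul_zero, zero_mul, add_zero, altSum]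
  rw [← hext, sum_range_succ', qBinom_zero_right hx]
  ring

lemma altSum_succ (m : ℕ) (z : K) :
    altSum x (m + 1) z = altSum x m (x * z) - z * altSum x m z := by
  have hsplit : ∀ e ∈ range (m + 1), (-1) ^ (e + 1) * qBinom x (m + 1) (e + 1) * z ^ (e + 1) =
      (-1) ^ (e + 1) * qBinom x m (e + 1) * (x * z) ^ (e + 1)
        + -z * ((-1) ^ e * qBinom x m e * z ^ e) := by
    intro e he
    rw [qBinom_succ_succ' hx (Nat.lt_succ_iff.mp (mem_range.mp he))]
    ring
  rw [altSum, sum_range_succ', sum_congr rfl hsplit, sum_add_distrib, ← mul_sum,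
    altSum_eq_one_add hx m (x * z), qBinom_zero_right hx, ← altSum]
  ring

lemma altSum_succ_mul_self (m : ℕ) (z : K) :
    altSum x (m + 1) (x * z) = altSum x m (x * z) - x ^ (m + 1) * z * altSum x m z := by
  have hsplit : ∀ e ∈ range (m + 1), (-1) ^ (e + 1) * qBinom x (m + 1) (e + 1) * (x * z) ^ (e + 1) =
      (-1) ^ (e + 1) * qBinom x m (e + 1) * (x * z) ^ (e + 1)
        + -(x ^ (m + 1) * z) * ((-1) ^ e * qBinom x m e * z ^ e) := by
    intro e he
    have he' : e ≤ m := Nat.lt_succ_iff.mp (mem_range.mp he)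
    have hpow : x ^ (m - e) * x ^ (e + 1) = x ^ (m + 1) := by rw [← pow_add]; congr 1; omega
    rw [qBinom_succ_succ hx he', ← hpow]
    ring
  rw [altSum, sum_range_succ', sum_congr rfl hsplit, sum_add_distrib, ← mul_sum,
    altSum_eq_one_add hx m (x * z), qBinom_zero_right hx, ← altSum]
  ring

lemma altSum_self_and_altSum_one (m : ℕ) :
    altSum x m x = oddProd x m ∧ altSum x m 1 = if Even m then oddProd x m else 0 := by
  induction m with
  | zero => simp [altSum, oddProd, qBinom_zero_right hx]
  | succ m ih =>
    have hself := altSum_succ_mul_self hx m 1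
    have hone := altSum_succ hx m 1
    rw [mul_one, ih.1, ih.2] at hself hone
    rcases Nat.even_or_odd m with hm | hm
    · rw [oddProd_succ_of_even hm, if_neg (Nat.not_even_iff_odd.mpr hm.add_one)]
      rw [if_pos hm] at hself hone
      exact ⟨by rw [hself]; ring, by rw [hone]; ring⟩
    · rw [oddProd_succ_of_odd hm, if_pos hm.add_one]
      rw [if_neg (Nat.not_even_iff_odd.mpr hm)] at hself hone
      exact ⟨by rw [hself]; ring, by rw [hone]; ring⟩

theorem altSum_self (m : ℕ) : altSum x m x = oddProd x m :=
  (altSum_self_and_altSum_one hx m).1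

end QBinom

lemma Real.rpow_neg_natCast_eq_inv_pow (q : ℝ) (n : ℕ) : q ^ (-(n : ℝ)) = q⁻¹ ^ n := by
  rw [Real.rpow_neg_natCast, zpow_neg, zpow_natCast, inv_pow]

lemma etaQ_eq_qPoch (q : ℝ) (k : ℕ) : etaQ q k = QBinom.qPoch q⁻¹ k := by
  refine prod_congr rfl fun i _ => ?_
  rw [show -(i : ℝ) - 1 = -((i + 1 : ℕ) : ℝ) by push_cast; ring, Real.rpow_neg_natCast_eq_inv_pow]

lemma Pf_zero_eq_altSum (q : ℝ) (m : ℕ) : Pf q 0 m = QBinom.altSum q⁻¹ m q⁻¹ := by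
  refine sum_congr rfl fun e he => ?_
  rw [QBinom.qBinom, if_pos (Nat.lt_succ_iff.mp (mem_range.mp he)), etaQ_eq_qPoch, etaQ_eq_qPoch,
    etaQ_eq_qPoch, show -(0 + 1) * (e : ℝ) = -(e : ℝ) by ring, Real.rpow_neg_natCast_eq_inv_pow]
  ring

/-- For a prime power `q` and `m ∈ ℕ`,
`Pf_q(0,m) = ∏_{j=1}^{⌈m/2⌉} (1 - q^{-(2j-1)})`. -/
theorem stmt_4 (q : ℕ) (hq : IsPrimePow q) (m : ℕ) :
    Pf (q : ℝ) 0 m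
      = ∏ j ∈ Finset.range ((m + 1) / 2), (1 - (q : ℝ) ^ (-(2 * (j : ℝ) + 1))) := by
  have hx : ∀ n ≠ 0, (q : ℝ)⁻¹ ^ n ≠ 1 := fun n hn =>
    (pow_lt_one₀ (by positivity) (inv_lt_one_of_one_lt₀ (by exact_mod_cast hq.one_lt)) hn).ne
  rw [Pf_zero_eq_altSum, QBinom.altSum_self hx]
  refine prod_congr rfl fun j _ => ?_
  rw [show -(2 * (j : ℝ) + 1) = -((2 * j + 1 : ℕ) : ℝ) by push_cast; ring,
    Real.rpow_neg_natCast_eq_inv_pow]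
end

section
/- Let q be a prime power and let λ₋₁, λ, φ₋₁, φ, s₁, s₂ be integers with λ₋₁ ≥ λ and φ₋₁ ≥ φ. Assume φ₋₁ − λ₋₁ ≤ s₁ and λ₋₁ − φ₋₁ ≤ s₂. Then: (1) Qf_q(λ₋₁, λ, φ₋₁, φ, s₁, s₂) ≥ 0; and (2) Qf_q(λ₋₁, λ, φ₋₁, φ, s₁, s₂) > 0 if and only if φ − λ ≤ s₁ and λ − φ ≤ s₂. -/
open scoped BigOperators

/-- `Qf_q(λ₋₁,λ,φ₋₁,φ,s₁,s₂) = ∑_{e=0}^{λ₋₁-λ} ∑_{f=0}^{φ₋₁-φ} (-1)^{e+f} q^{E(e,f)}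
/ (η_q(e) η_q(λ₋₁-λ-e) η_q(f) η_q(φ₋₁-φ-f))` where
`E(e,f) = (λ+e)(λ+e-1)/2 - λ(λ-1)/2 - s₁(λ+e) + (φ+f)(φ+f-1)/2 - φ(φ-1)/2 - s₂(φ+f)
+ (λ+e)(φ+f) - (λ+e)² - (φ+f)²`. -/
noncomputable def Qf (q : ℝ) (lm l pm ph s₁ s₂ : ℤ) : ℝ :=
  ∑ e ∈ Finset.range ((lm - l).toNat + 1), ∑ f ∈ Finset.range ((pm - ph).toNat + 1),
    (-1 : ℝ) ^ (e + f) *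
      q ^ (((l : ℝ) + e) * ((l : ℝ) + e - 1) / 2 - (l : ℝ) * ((l : ℝ) - 1) / 2
            - (s₁ : ℝ) * ((l : ℝ) + e)
            + ((ph : ℝ) + f) * ((ph : ℝ) + f - 1) / 2 - (ph : ℝ) * ((ph : ℝ) - 1) / 2
            - (s₂ : ℝ) * ((ph : ℝ) + f)
            + ((l : ℝ) + e) * ((ph : ℝ) + f) - ((l : ℝ) + e) ^ 2 - ((ph : ℝ) + f) ^ 2) /
      (etaQ q e * etaQ q ((lm - l).toNat - e) * etaQ q f * etaQ q ((pm - ph).toNat - f))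

/-!
With `m = λ₋₁ - λ`, `n = φ₋₁ - φ`, `A = s₁ + λ - φ`, `B = s₂ + φ - λ`, the sum `Qf` is a positive
power of `q` times `qDoubleSum q m n A B = ∑_{f + f' = n} qTerm q B f f' · S_m(A - f)`, where
`S_m(C) = qSum q m C` is the `q`-binomial expansion of `∏_{k<m} (1 - q^{-k-1-C}) / η_q(m)`. The
recursion behind that product, `(1 - q^{-m-1}) S_{m+1}(C) = (1 - q^{-1-C}) S_m(C + 1)`, already
gives `S_m(C) > 0` for `C ≥ 0` and `S_m(C) = 0` for integers `-m ≤ C ≤ -1`. The latter kills the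
double sum as soon as `A < 0` or `B < 0` (given `n - m ≤ A` and `m - n ≤ B`). For `A, B ≥ 0`
positivity follows by induction from two recursions of the double sum: one lowers `n` and writes it
as a sum of two positive terms, the other lowers `m` when `B = 0`, where the subtracted term
vanishes.
-/

open Finset Real

section

variable {Q : ℝ}

lemma one_sub_rpow_pos (hQ : 1 < Q) {x : ℝ} (hx : x < 0) : 0 < 1 - Q ^ x :=
  sub_pos.2 (rpow_lt_one_of_one_lt_of_neg hQ hx)

lemma etaQ_succ (k : ℕ) : etaQ Q (k + 1) = etaQ Q k * (1 - Q ^ (-((k : ℝ) + 1))) := by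
  rw [etaQ, prod_range_succ, neg_add']
  rfl

lemma etaQ_pos (hQ : 1 < Q) (k : ℕ) : 0 < etaQ Q k :=
  prod_pos fun i _ => one_sub_rpow_pos hQ (by linarith [(i.cast_nonneg : (0 : ℝ) ≤ i)])

-- Summed over `i + j = n` (`antidiagonal n`), so that `η(n - i)` is `η j`, with no truncated
-- subtraction.
noncomputable def qTerm (Q C : ℝ) (i j : ℕ) : ℝ :=
  (-1) ^ i * Q ^ (-((i : ℝ) * (i + 1) / 2) - C * i) / (etaQ Q i * etaQ Q j)

lemma qTerm_sub (hQ : 0 < Q) (C s : ℝ) (i j : ℕ) :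
    qTerm Q (C - s) i j = Q ^ (s * i) * qTerm Q C i j := by
  rw [qTerm, qTerm, mul_div_assoc', mul_left_comm, ← rpow_add hQ]
  ring_nf

lemma qTerm_succ_right (hQ : 1 < Q) (C : ℝ) (i j : ℕ) :
    (1 - Q ^ (-((j : ℝ) + 1))) * qTerm Q C i (j + 1) = qTerm Q C i j := by
  have hj := one_sub_rpow_pos hQ (by linarith [(j.cast_nonneg : (0 : ℝ) ≤ j)] :
    -((j : ℝ) + 1) < 0)
  have := etaQ_pos hQ i
  have := etaQ_pos hQ j
  rw [qTerm, qTerm, etaQ_succ]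
  field_simp

lemma qTerm_succ_left (hQ : 1 < Q) (C : ℝ) (i j : ℕ) :
    (1 - Q ^ (-((i : ℝ) + 1))) * qTerm Q C (i + 1) j = -(Q ^ (-1 - C) * qTerm Q (C + 1) i j) := by
  have hi := one_sub_rpow_pos hQ (by linarith [(i.cast_nonneg : (0 : ℝ) ≤ i)] :
    -((i : ℝ) + 1) < 0)
  have := etaQ_pos hQ i
  have := etaQ_pos hQ j
  have hexp : Q ^ (-(((i + 1 : ℕ) : ℝ) * ((i + 1 : ℕ) + 1) / 2) - C * (i + 1 : ℕ))
      = Q ^ (-1 - C) * Q ^ (-((i : ℝ) * (i + 1) / 2) - (C + 1) * i) := by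
    rw [← rpow_add (by linarith)]
    push_cast
    ring_nf
  rw [qTerm, qTerm, etaQ_succ, hexp, pow_succ]
  field_simp

noncomputable def qSum (Q : ℝ) (n : ℕ) (C : ℝ) : ℝ :=
  ∑ p ∈ antidiagonal n, qTerm Q C p.1 p.2

lemma sum_antidiagonal_succ_one_sub_rpow_snd_mul_qTerm (hQ : 1 < Q) (n : ℕ) (C : ℝ)
    (g : ℕ → ℝ) :
    ∑ p ∈ antidiagonal (n + 1), (1 - Q ^ (-(p.2 : ℝ))) * qTerm Q C p.1 p.2 * g p.1
      = ∑ p ∈ antidiagonal n, qTerm Q C p.1 p.2 * g p.1 := by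
  rw [Nat.sum_antidiagonal_succ']
  simp only [Nat.cast_zero, neg_zero, rpow_zero, sub_self, zero_mul, zero_add, Nat.cast_succ]
  exact sum_congr rfl fun p _ => by rw [qTerm_succ_right hQ]

lemma sum_antidiagonal_succ_one_sub_rpow_fst_mul_qTerm (hQ : 1 < Q) (n : ℕ) (C : ℝ) :
    ∑ p ∈ antidiagonal (n + 1), (1 - Q ^ (-(p.1 : ℝ))) * qTerm Q C p.1 p.2
      = -(Q ^ (-1 - C) * qSum Q n (C + 1)) := by
  rw [Nat.sum_antidiagonal_succ, qSum, mul_sum, ← sum_neg_distrib]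
  simp only [Nat.cast_zero, neg_zero, rpow_zero, sub_self, zero_mul, zero_add, Nat.cast_succ]
  exact sum_congr rfl fun p _ => qTerm_succ_left hQ C p.1 p.2

lemma qSum_zero (C : ℝ) : qSum Q 0 C = 1 := by
  simp [qSum, qTerm, etaQ]

lemma qSum_succ (hQ : 1 < Q) (m : ℕ) (C : ℝ) :
    (1 - Q ^ (-((m : ℝ) + 1))) * qSum Q (m + 1) C = (1 - Q ^ (-1 - C)) * qSum Q m (C + 1) := by
  -- q-Pascal: `1 - Q^{-(i+j)} = (1 - Q^{-i}) + Q^{-i} (1 - Q^{-j})`.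
  have hsplit : ∀ p ∈ antidiagonal (m + 1), (1 - Q ^ (-((m : ℝ) + 1))) * qTerm Q C p.1 p.2
      = (1 - Q ^ (-(p.1 : ℝ))) * qTerm Q C p.1 p.2
        + (1 - Q ^ (-(p.2 : ℝ))) * qTerm Q (C + 1) p.1 p.2 * 1 := by
    intro p hp
    have hp : (p.1 : ℝ) + p.2 = m + 1 := by exact_mod_cast mem_antidiagonal.1 hp
    have hQp : Q ^ (-((m : ℝ) + 1)) = Q ^ (-(p.1 : ℝ)) * Q ^ (-(p.2 : ℝ)) := by
      rw [← rpow_add (by linarith), ← hp, neg_add]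
    rw [← sub_neg_eq_add C 1, qTerm_sub (zero_lt_one.trans hQ), hQp, neg_one_mul]
    ring
  rw [qSum, mul_sum, sum_congr rfl hsplit, sum_add_distrib,
    sum_antidiagonal_succ_one_sub_rpow_fst_mul_qTerm hQ,
    sum_antidiagonal_succ_one_sub_rpow_snd_mul_qTerm hQ m (C + 1) fun _ => 1]
  simp only [qSum, mul_one]
  ring

lemma qSum_pos (hQ : 1 < Q) (m : ℕ) {C : ℝ} (hC : 0 ≤ C) : 0 < qSum Q m C := by
  induction m generalizing C with
  | zero => rw [qSum_zero]; exact one_pos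
  | succ m ih =>
    have hrec := qSum_succ hQ m C
    have hrhs : 0 < (1 - Q ^ (-1 - C)) * qSum Q m (C + 1) :=
      mul_pos (one_sub_rpow_pos hQ (by linarith)) (ih (by linarith))
    rw [← hrec] at hrhs
    exact pos_of_mul_pos_right hrhs
      (one_sub_rpow_pos hQ (by linarith [(m.cast_nonneg : (0 : ℝ) ≤ m)])).le

lemma qSum_eq_zero (hQ : 1 < Q) {m : ℕ} {C : ℤ} (h₁ : -(m : ℤ) ≤ C) (h₂ : C ≤ -1) :
    qSum Q m C = 0 := by
  induction m generalizing C with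
  | zero => omega
  | succ m ih =>
    have hrec := qSum_succ hQ m C
    have hrhs : (1 - Q ^ (-1 - (C : ℝ))) * qSum Q m (C + 1) = 0 := by
      rcases eq_or_lt_of_le h₂ with rfl | hlt
      · simp
      · exact_mod_cast mul_eq_zero_of_right _ (ih (C := C + 1) (by omega) (by omega))
    rw [hrhs] at hrec
    exact (mul_eq_zero.1 hrec).resolve_left
      (one_sub_rpow_pos hQ (by linarith [(m.cast_nonneg : (0 : ℝ) ≤ m)])).ne'

noncomputable def qDoubleSum (Q : ℝ) (m n : ℕ) (A B : ℝ) : ℝ :=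
  ∑ p ∈ antidiagonal m, ∑ r ∈ antidiagonal n,
    qTerm Q A p.1 p.2 * qTerm Q B r.1 r.2 * Q ^ ((p.1 : ℝ) * r.1)

lemma qDoubleSum_comm (m n : ℕ) (A B : ℝ) : qDoubleSum Q m n A B = qDoubleSum Q n m B A := by
  rw [qDoubleSum, qDoubleSum, sum_comm]
  refine sum_congr rfl fun r _ => sum_congr rfl fun p _ => ?_
  rw [mul_comm (r.1 : ℝ)]
  ring

lemma qDoubleSum_eq_sum_qSum (hQ : 0 < Q) (m n : ℕ) (A B : ℝ) :
    qDoubleSum Q m n A B = ∑ r ∈ antidiagonal n, qTerm Q B r.1 r.2 * qSum Q m (A - r.1) := by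
  rw [qDoubleSum, sum_comm]
  refine sum_congr rfl fun r _ => ?_
  rw [qSum, mul_sum]
  refine sum_congr rfl fun p _ => ?_
  rw [qTerm_sub hQ, mul_comm (r.1 : ℝ)]
  ring

lemma qDoubleSum_zero_right (hQ : 0 < Q) (m : ℕ) (A B : ℝ) :
    qDoubleSum Q m 0 A B = qSum Q m A := by
  simp [qDoubleSum_eq_sum_qSum hQ, qTerm, etaQ]

lemma qDoubleSum_eq_zero_left (hQ : 1 < Q) {m n : ℕ} {A : ℤ} (B : ℝ)
    (h₁ : (n : ℤ) - m ≤ A) (h₂ : A ≤ -1) : qDoubleSum Q m n A B = 0 := by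
  rw [qDoubleSum_eq_sum_qSum (zero_lt_one.trans hQ)]
  refine sum_eq_zero fun r hr => ?_
  have hr := mem_antidiagonal.1 hr
  rw [← Int.cast_natCast, ← Int.cast_sub, qSum_eq_zero hQ (by omega) (by omega), mul_zero]

lemma qDoubleSum_eq_zero_right (hQ : 1 < Q) {m n : ℕ} (A : ℝ) {B : ℤ}
    (h₁ : (m : ℤ) - n ≤ B) (h₂ : B ≤ -1) : qDoubleSum Q m n A B = 0 := by
  rw [qDoubleSum_comm]
  exact qDoubleSum_eq_zero_left hQ A h₁ h₂

lemma qDoubleSum_succ_right (hQ : 1 < Q) (m n : ℕ) (A B : ℝ) :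
    qDoubleSum Q m (n + 1) A B
      = Q ^ (-((n : ℝ) + 1)) * qDoubleSum Q m (n + 1) A (B - 1) + qDoubleSum Q m n A B := by
  have hQ0 : 0 < Q := zero_lt_one.trans hQ
  rw [qDoubleSum_eq_sum_qSum hQ0, qDoubleSum_eq_sum_qSum hQ0, qDoubleSum_eq_sum_qSum hQ0,
    ← sum_antidiagonal_succ_one_sub_rpow_snd_mul_qTerm hQ n B fun f => qSum Q m (A - f),
    mul_sum, ← sum_add_distrib]
  refine sum_congr rfl fun r hr => ?_
  have hr : (r.1 : ℝ) + r.2 = n + 1 := by exact_mod_cast mem_antidiagonal.1 hr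
  have hQr : Q ^ (-((n : ℝ) + 1)) * Q ^ (1 * (r.1 : ℝ)) = Q ^ (-(r.2 : ℝ)) := by
    rw [← rpow_add hQ0]
    congr 1
    linarith
  rw [qTerm_sub hQ0]
  linear_combination -(qTerm Q B r.1 r.2 * qSum Q m (A - r.1)) * hQr

lemma qDoubleSum_succ_left (hQ : 1 < Q) (m n : ℕ) (A B : ℝ) :
    (1 - Q ^ (-((m : ℝ) + 1))) * qDoubleSum Q (m + 1) n A B
      = qDoubleSum Q m n (A + 1) B - Q ^ (-A - 1) * qDoubleSum Q m n (A + 1) (B - 1) := by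
  have hQ0 : 0 < Q := zero_lt_one.trans hQ
  rw [qDoubleSum_eq_sum_qSum hQ0, qDoubleSum_eq_sum_qSum hQ0, qDoubleSum_eq_sum_qSum hQ0,
    mul_sum, mul_sum, ← sum_sub_distrib]
  refine sum_congr rfl fun r _ => ?_
  have hrec := qSum_succ hQ m (A - r.1)
  have hQr : Q ^ (-1 - (A - r.1)) = Q ^ (-A - 1) * Q ^ (1 * (r.1 : ℝ)) := by
    rw [← rpow_add hQ0]
    ring_nf
  rw [hQr, sub_add_eq_add_sub] at hrec
  rw [qTerm_sub hQ0]
  linear_combination qTerm Q B r.1 r.2 * hrec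

lemma qDoubleSum_succ_right_pos (hQ : 1 < Q) {m n : ℕ} {A B : ℝ}
    (h₁ : 0 < qDoubleSum Q m (n + 1) A (B - 1)) (h₂ : 0 < qDoubleSum Q m n A B) :
    0 < qDoubleSum Q m (n + 1) A B := by
  rw [qDoubleSum_succ_right hQ]
  exact add_pos (mul_pos (rpow_pos_of_pos (by linarith) _) h₁) h₂

lemma qDoubleSum_succ_left_pos (hQ : 1 < Q) {m n : ℕ} (hmn : m < n) {A : ℝ}
    (h : 0 < qDoubleSum Q m n (A + 1) 0) : 0 < qDoubleSum Q (m + 1) n A 0 := by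
  have hrec := qDoubleSum_succ_left hQ m n A 0
  have hvanish : qDoubleSum Q m n (A + 1) (0 - 1) = 0 := by
    simpa using qDoubleSum_eq_zero_right hQ (A + 1) (B := -1) (by omega) le_rfl
  rw [hvanish, mul_zero, sub_zero] at hrec
  rw [← hrec] at h
  exact pos_of_mul_pos_right h
    (one_sub_rpow_pos hQ (by linarith [(m.cast_nonneg : (0 : ℝ) ≤ m)])).le

theorem qDoubleSum_pos (hQ : 1 < Q) (m n : ℕ) (A B : ℤ) (hA : 0 ≤ A) (hB : 0 ≤ B)
    (hnm : (n : ℤ) - m ≤ A) (hmn : (m : ℤ) - n ≤ B) : 0 < qDoubleSum Q m n A B := by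
  have hQ0 : 0 < Q := zero_lt_one.trans hQ
  -- For `m, n ≥ 1`: if `B = 0` lower `m`, if `B > max 0 (m - n)` lower `B` and `n`, and
  -- symmetrically for `A`; one case applies since `A = n - m` and `B = m - n` are not both `> 0`.
  match m, n with
  | m, 0 => exact qDoubleSum_zero_right hQ0 m A B ▸ qSum_pos hQ m (Int.cast_nonneg hA)
  | 0, n + 1 =>
    rw [qDoubleSum_comm]
    exact qDoubleSum_zero_right hQ0 _ B A ▸ qSum_pos hQ _ (Int.cast_nonneg hB)
  | m + 1, n + 1 =>
    if hB0 : B = 0 then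
      subst hB0
      have hprev := qDoubleSum_pos hQ m (n + 1) (A + 1) 0 (by omega) le_rfl (by omega) (by omega)
      push_cast at hprev ⊢
      exact qDoubleSum_succ_left_pos hQ (by omega) hprev
    else if hA0 : A = 0 then
      subst hA0
      have hprev := qDoubleSum_pos hQ (m + 1) n 0 (B + 1) le_rfl (by omega) (by omega) (by omega)
      rw [qDoubleSum_comm] at hprev ⊢
      push_cast at hprev ⊢
      exact qDoubleSum_succ_left_pos hQ (by omega) hprev
    else if hBmn : (m : ℤ) - n < B then
      have h₁ := qDoubleSum_pos hQ (m + 1) (n + 1) A (B - 1) hA (by omega) hnm (by omega)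
      have h₂ := qDoubleSum_pos hQ (m + 1) n A B hA hB (by omega) (by omega)
      push_cast at h₁
      exact qDoubleSum_succ_right_pos hQ h₁ h₂
    else
      have h₁ := qDoubleSum_pos hQ (m + 1) (n + 1) (A - 1) B (by omega) hB (by omega) hmn
      have h₂ := qDoubleSum_pos hQ m (n + 1) A B hA hB (by omega) (by omega)
      rw [qDoubleSum_comm] at h₁ h₂ ⊢
      push_cast at h₁
      exact qDoubleSum_succ_right_pos hQ h₁ h₂
-- Lowering `m` raises `A` by one, hence the weight `2` on `m + n`.
termination_by 2 * (m + n) + (A + B).toNat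
decreasing_by all_goals omega

theorem qDoubleSum_nonneg_and_pos_iff (hQ : 1 < Q) (m n : ℕ) (A B : ℤ)
    (hnm : (n : ℤ) - m ≤ A) (hmn : (m : ℤ) - n ≤ B) :
    0 ≤ qDoubleSum Q m n A B ∧ (0 < qDoubleSum Q m n A B ↔ 0 ≤ A ∧ 0 ≤ B) := by
  by_cases h : 0 ≤ A ∧ 0 ≤ B
  · have hpos := qDoubleSum_pos hQ m n A B h.1 h.2 hnm hmn
    exact ⟨hpos.le, iff_of_true hpos h⟩
  · have hzero : qDoubleSum Q m n A B = 0 := by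
      rcases not_and_or.1 h with hA | hB
      · exact qDoubleSum_eq_zero_left hQ _ hnm (by omega)
      · exact qDoubleSum_eq_zero_right hQ _ hmn (by omega)
    rw [hzero]
    exact ⟨le_rfl, iff_of_false (lt_irrefl 0) h⟩

lemma Qf_eq (hQ : 0 < Q) (lm l pm ph s₁ s₂ : ℤ) :
    Qf Q lm l pm ph s₁ s₂
      = Q ^ (-(s₁ : ℝ) * l - s₂ * ph + l * ph - l ^ 2 - ph ^ 2) *
        qDoubleSum Q (lm - l).toNat (pm - ph).toNat ((s₁ + l - ph : ℤ) : ℝ)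
          ((s₂ + ph - l : ℤ) : ℝ) := by
  have hsplit : ∀ x a b c d : ℝ, x = a + b + c + d → Q ^ x = Q ^ a * Q ^ b * Q ^ c * Q ^ d := by
    intro x a b c d hx
    rw [hx, rpow_add hQ, rpow_add hQ, rpow_add hQ]
  rw [Qf, qDoubleSum, mul_sum, Nat.sum_antidiagonal_eq_sum_range_succ_mk]
  refine sum_congr rfl fun e _ => ?_
  rw [mul_sum, Nat.sum_antidiagonal_eq_sum_range_succ_mk]
  refine sum_congr rfl fun f _ => ?_
  rw [hsplit _ (-(s₁ : ℝ) * l - s₂ * ph + l * ph - l ^ 2 - ph ^ 2)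
    (-((e : ℝ) * (e + 1) / 2) - ((s₁ + l - ph : ℤ) : ℝ) * e)
    (-((f : ℝ) * (f + 1) / 2) - ((s₂ + ph - l : ℤ) : ℝ) * f) ((e : ℝ) * f), qTerm, qTerm, pow_add]
  · ring
  · push_cast
    ring

end

/-- Let `q` be a prime power and `λ₋₁ ≥ λ`, `φ₋₁ ≥ φ`, `s₁`, `s₂` integers with
`φ₋₁ - λ₋₁ ≤ s₁` and `λ₋₁ - φ₋₁ ≤ s₂`.  Then `Qf_q(λ₋₁,λ,φ₋₁,φ,s₁,s₂) ≥ 0`, with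
equality to a positive number exactly when `φ - λ ≤ s₁` and `λ - φ ≤ s₂`. -/
theorem stmt_6 (q : ℕ) (hq : IsPrimePow q) (lm l pm ph s₁ s₂ : ℤ)
    (hl : l ≤ lm) (hp : ph ≤ pm) (h₁ : pm - lm ≤ s₁) (h₂ : lm - pm ≤ s₂) :
    0 ≤ Qf (q : ℝ) lm l pm ph s₁ s₂ ∧
    (0 < Qf (q : ℝ) lm l pm ph s₁ s₂ ↔ ph - l ≤ s₁ ∧ l - ph ≤ s₂) := by
  have hQ : (1 : ℝ) < q := by exact_mod_cast hq.one_lt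
  obtain ⟨hnonneg, hpos⟩ := qDoubleSum_nonneg_and_pos_iff hQ (lm - l).toNat (pm - ph).toNat
    (s₁ + l - ph) (s₂ + ph - l) (by omega) (by omega)
  have hc : (0 : ℝ) < (q : ℝ) ^ (-(s₁ : ℝ) * l - s₂ * ph + l * ph - l ^ 2 - ph ^ 2) :=
    rpow_pos_of_pos (by linarith) _
  rw [Qf_eq (zero_lt_one.trans hQ), mul_pos_iff_of_pos_left hc, hpos]
  exact ⟨mul_nonneg hc.le hnonneg, by omega⟩
end
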